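/- Let X_1, …, X_n ∈ [0,1], m_0 ∈ (0,1), S_n = Σ_{i=1}^n (X_i - m_0), and V_n = Σ_{i=1}^n (X_i - m_0)². Then sup over λ ∈ [-1,1] of Σ_{i=1}^n ln(1 - λ(X_i - m_0)) ≥ S_n² / ((4/3)|S_n| + 2V_n), where the bound is interpreted as 0 when S_n = V_n = 0. -/

import Mathlib

open Set

lemma mono_aux {f f' : ℝ → ℝ} {a b : ℝ} (hab : a ≤ b)
    (hder : ∀ x ∈ Set.Icc a b, HasDerivAt f (f' x) x)
    (hpos : ∀ x ∈ Set.Icc a b, 0 ≤ f' x) : f a ≤ f b := by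
  have hm : MonotoneOn f (Set.Icc a b) := by
    apply monotoneOn_of_deriv_nonneg (convex_Icc a b)
    · exact fun x hx => (hder x hx).continuousAt.continuousWithinAt
    · intro x hx
      rw [interior_Icc] at hx
      exact ((hder x (Ioo_subset_Icc_self hx)).differentiableAt).differentiableWithinAt
    · intro x hx
      rw [interior_Icc] at hx
      rw [(hder x (Ioo_subset_Icc_self hx)).deriv]
      exact hpos x (Ioo_subset_Icc_self hx)
  exact hm ⟨le_refl a, hab⟩ ⟨hab, le_refl b⟩ hab

lemma lemA (x : ℝ) (hx : 0 ≤ x) : x - x^2/2 ≤ Real.log (1+x) := by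
  have h := mono_aux (f := fun y => Real.log (1+y) - y + y^2/2)
      (f' := fun y => y^2/(1+y)) (a := 0) (b := x) hx ?_ ?_
  · simp only [add_zero, Real.log_one] at h
    norm_num at h
    linarith
  · intro y hy
    have hy0 : (0:ℝ) < 1 + y := by have := hy.1; linarith
    have h1 : HasDerivAt (fun y : ℝ => Real.log (1+y)) (1/(1+y)) y := by
      simpa using (HasDerivAt.log ((hasDerivAt_id y).const_add 1) (ne_of_gt hy0))
    have h2 := (h1.sub (hasDerivAt_id y)).add ((hasDerivAt_pow 2 y).div_const 2)
    refine h2.congr_deriv ?_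
    field_simp
    ring
  · intro y hy
    have hy0 : (0:ℝ) < 1 + y := by have := hy.1; linarith
    positivity

lemma lemA2 (c : ℝ) (hc : 0 ≤ c) (hc1 : c < 1) : Real.log (1-c) ≤ -c - c^2/2 := by
  have h := mono_aux (f := fun y => -y - y^2/2 - Real.log (1-y))
      (f' := fun y => y^2/(1-y)) (a := 0) (b := c) hc ?_ ?_
  · simp only [sub_zero, Real.log_one] at h
    norm_num at h
    linarith
  · intro y hy
    have hy0 : (0:ℝ) < 1 - y := by have := hy.2; linarith
    have h1 : HasDerivAt (fun y : ℝ => Real.log (1-y)) (-1/(1-y)) y := by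
      simpa using (HasDerivAt.log ((hasDerivAt_id y).const_sub 1) (ne_of_gt hy0))
    have h2 := ((hasDerivAt_id y).neg.sub ((hasDerivAt_pow 2 y).div_const 2)).sub h1
    refine h2.congr_deriv ?_
    field_simp
    ring
  · intro y hy
    have hy0 : (0:ℝ) < 1 - y := by have := hy.2; linarith
    positivity

lemma lemQ (y : ℝ) (hy : 0 ≤ y) (hy1 : y < 1) :
    0 ≤ y^2/(1-y) + 2*y + 2*Real.log (1-y) := by
  have h := mono_aux (f := fun u => u^2/(1-u) + 2*u + 2*Real.log (1-u))
      (f' := fun u => u^2/(1-u)^2) (a := 0) (b := y) hy ?_ ?_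
  · simp only [sub_zero, Real.log_one] at h
    norm_num at h
    linarith
  · intro u hu
    have hu0 : (0:ℝ) < 1 - u := by have := hu.2; linarith
    have h1 : HasDerivAt (fun u : ℝ => Real.log (1-u)) (-1/(1-u)) u := by
      simpa using (HasDerivAt.log ((hasDerivAt_id u).const_sub 1) (ne_of_gt hu0))
    have h2 := (((hasDerivAt_pow 2 u).div ((hasDerivAt_id u).const_sub 1) (ne_of_gt hu0)).add
      ((hasDerivAt_id u).const_mul 2)).add (h1.const_mul 2)
    refine h2.congr_deriv ?_
    have hne : (1:ℝ) - u ≠ 0 := ne_of_gt hu0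
    simp only [id]
    field_simp
    ring
  · intro u hu
    have hu0 : (0:ℝ) < 1 - u := by have := hu.2; linarith
    positivity

lemma lemP2 (y c : ℝ) (hy : 0 ≤ y) (hyc : y ≤ c) (hc1 : c < 1) :
    y^2*(c + Real.log (1-c)) ≤ c^2*(y + Real.log (1-y)) := by
  have hy1 : y < 1 := lt_of_le_of_lt hyc hc1
  have h := mono_aux (f := fun u => u^2*(y + Real.log (1-y)) - y^2*(u + Real.log (1-u)))
      (f' := fun u => u*(2*(y+Real.log (1-y)) + y^2/(1-u))) (a := y) (b := c) hyc ?_ ?_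
  · have h' : y^2*(y + Real.log (1-y)) - y^2*(y + Real.log (1-y)) ≤
        c^2*(y + Real.log (1-y)) - y^2*(c + Real.log (1-c)) := h
    linarith
  · intro u hu
    have hu0 : (0:ℝ) < 1 - u := by have := hu.2; linarith
    have h1 : HasDerivAt (fun u : ℝ => Real.log (1-u)) (-1/(1-u)) u := by
      simpa using (HasDerivAt.log ((hasDerivAt_id u).const_sub 1) (ne_of_gt hu0))
    have h2 := (((hasDerivAt_pow 2 u)).mul_const (y + Real.log (1-y))).sub
      ((((hasDerivAt_id u)).add h1).const_mul (y^2))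
    refine h2.congr_deriv ?_
    field_simp
    ring
  · intro u hu
    have hu0 : (0:ℝ) < 1 - u := by have := hu.2; linarith
    have huy : 0 ≤ u := le_trans hy hu.1
    have hQ := lemQ y hy hy1
    have hmono : y^2/(1-y) ≤ y^2/(1-u) := by
      apply div_le_div_of_nonneg_left (sq_nonneg y) hu0
      have := hu.1; linarith
    have : 0 ≤ 2*(y+Real.log (1-y)) + y^2/(1-u) := by
      have hylog : 2*(y+Real.log (1-y)) + y^2/(1-y) ≥ 0 := by linarith
      linarith
    positivity

lemma lemPADE (r : ℝ) (hr : 0 ≤ r) : Real.log (1+r) ≤ r*(6+r)/(6+4*r) := by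
  have h := mono_aux (f := fun u => u*(6+u)/(6+4*u) - Real.log (1+u))
      (f' := fun u => 4*u^3/((6+4*u)^2*(1+u))) (a := 0) (b := r) hr ?_ ?_
  · simp only [add_zero, Real.log_one] at h
    norm_num at h
    linarith
  · intro u hu
    have hu0 : (0:ℝ) < 1 + u := by have := hu.1; linarith
    have hd : (0:ℝ) < 6 + 4*u := by have := hu.1; linarith
    have h1 : HasDerivAt (fun u : ℝ => Real.log (1+u)) (1/(1+u)) u := by
      simpa using (HasDerivAt.log ((hasDerivAt_id u).const_add 1) (ne_of_gt hu0))
    have hnum : HasDerivAt (fun u : ℝ => u*(6+u)) (6+2*u) u := by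
      have := (hasDerivAt_id u).mul ((hasDerivAt_id u).const_add 6)
      refine this.congr_deriv ?_
      simp; ring
    have hden : HasDerivAt (fun u : ℝ => 6+4*u) 4 u := by
      simpa using ((hasDerivAt_id u).const_mul 4).const_add 6
    have h2 := (hnum.div hden (ne_of_gt hd)).sub h1
    refine h2.congr_deriv ?_
    have hne1 : (1:ℝ) + u ≠ 0 := ne_of_gt hu0
    have hne2 : (6:ℝ) + 4*u ≠ 0 := ne_of_gt hd
    rw [div_sub_div _ _ (by positivity) hne1, div_eq_div_iff (by positivity) (by positivity)]
    ring
  · intro u hu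
    have hu0 : (0:ℝ) < 1 + u := by have := hu.1; linarith
    have hd : (0:ℝ) < 6 + 4*u := by have := hu.1; linarith
    exact div_nonneg (mul_nonneg (by norm_num) (pow_nonneg hu.1 3))
      (le_of_lt (mul_pos (pow_pos hd 2) hu0))


lemma lemKEY (t : ℝ) (ht0 : 0 < t) (ht1 : t < 1) (x : ℝ) (hx1 : -t ≤ x) (hx2 : x ≤ t) :
    x^2*(Real.log (1-t) + t) ≤ t^2*(Real.log (1+x) - x) := by
  rcases le_or_gt 0 x with hx | hx
  · have h1 := lemA x hx
    have h2 := lemA2 t (le_of_lt ht0) ht1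
    nlinarith [sq_nonneg x, sq_nonneg t, sq_nonneg (x*t)]
  · have hy : 0 ≤ -x := by linarith
    have h := lemP2 (-x) t hy (by linarith) ht1
    have hrw : (1:ℝ) + x = 1 - (-x) := by ring
    rw [hrw]
    nlinarith [h]

theorem stmt_4 (n : ℕ) (X : Fin n → ℝ) (m0 : ℝ)
    (hm0 : m0 ∈ Set.Ioo (0 : ℝ) 1) (hX : ∀ i, X i ∈ Set.Icc (0 : ℝ) 1)
    (S V : ℝ) (hS : S = ∑ i, (X i - m0)) (hV : V = ∑ i, (X i - m0) ^ 2) :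
    sSup ((fun l : ℝ => ∑ i, Real.log (1 - l * (X i - m0))) '' Set.Icc (-1 : ℝ) 1) ≥
      S ^ 2 / ((4 / 3) * |S| + 2 * V) := by
  have hz1 : ∀ i, -1 ≤ X i - m0 := fun i => by have := (hX i).1; have := hm0.2; linarith
  have hz2 : ∀ i, X i - m0 ≤ 1 := fun i => by have := (hX i).2; have := hm0.1; linarith
  -- bounded above
  have hbdd : BddAbove ((fun l : ℝ => ∑ i, Real.log (1 - l * (X i - m0))) '' Set.Icc (-1:ℝ) 1) := by
    refine ⟨n, ?_⟩
    rintro v ⟨l, hl, rfl⟩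
    simp only
    calc ∑ i, Real.log (1 - l * (X i - m0)) ≤ ∑ i : Fin n, 1 := by
          apply Finset.sum_le_sum
          intro i _
          have habs : |1 - l * (X i - m0)| ≤ 2 := by
            have h1 : |l| ≤ 1 := abs_le.2 ⟨hl.1, hl.2⟩
            have h2 : |X i - m0| ≤ 1 := abs_le.2 ⟨hz1 i, hz2 i⟩
            calc |1 - l * (X i - m0)| ≤ |(1:ℝ)| + |l * (X i - m0)| := abs_sub _ _
              _ = 1 + |l| * |X i - m0| := by rw [abs_one, abs_mul]
              _ ≤ 2 := by
                  have := mul_le_one₀ h1 (abs_nonneg (X i - m0)) h2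
                  linarith
          rw [← Real.log_abs]
          rcases eq_or_lt_of_le (abs_nonneg (1 - l * (X i - m0))) with h | h
          · rw [← h, Real.log_zero]; norm_num
          · have := Real.log_le_sub_one_of_pos h
            linarith
      _ = (n : ℝ) := by simp
  rcases eq_or_ne S 0 with h0 | h0
  · have hmem : (∑ i, Real.log (1 - (0:ℝ) * (X i - m0))) ∈
        ((fun l : ℝ => ∑ i, Real.log (1 - l * (X i - m0))) '' Set.Icc (-1:ℝ) 1) :=
      ⟨0, by norm_num, rfl⟩
    refine le_trans ?_ (le_csSup hbdd hmem)
    rw [h0]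
    simp
  · -- V > 0
    have hVnn : 0 ≤ V := by
      rw [hV]; exact Finset.sum_nonneg fun i _ => sq_nonneg _
    have hVpos : 0 < V := by
      rcases eq_or_lt_of_le hVnn with h | h
      · exfalso
        apply h0
        rw [hS]
        apply Finset.sum_eq_zero
        intro i _
        have := (Finset.sum_eq_zero_iff_of_nonneg (fun i _ => sq_nonneg (X i - m0))).1 (hV ▸ h.symm) i (Finset.mem_univ i)
        exact pow_eq_zero_iff (by norm_num) |>.1 this
      · exact h
    set A := |S| with hAdef
    have hApos : 0 < A := abs_pos.2 h0
    set t := A/(A+V) with htdef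
    have hAV : 0 < A + V := by linarith
    have ht0 : 0 < t := div_pos hApos hAV
    have ht1 : t < 1 := by
      rw [htdef, div_lt_one hAV]; linarith
    set s : ℝ := if 0 ≤ S then 1 else -1 with hsdef
    have hsS : s * S = A := by
      rw [hsdef, hAdef]
      split_ifs with h
      · rw [abs_of_nonneg h]; ring
      · rw [abs_of_neg (lt_of_not_ge h)]; ring
    have hs2 : s^2 = 1 := by rw [hsdef]; split_ifs <;> norm_num
    have hsabs : |s| = 1 := by rw [hsdef]; split_ifs <;> norm_num
    set l : ℝ := -(s*t) with hldef
    have hl : l ∈ Set.Icc (-1:ℝ) 1 := by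
      have : |l| ≤ 1 := by
        rw [hldef, abs_neg, abs_mul, hsabs, one_mul, abs_of_pos ht0]
        linarith
      exact abs_le.1 this
    have hmem : (∑ i, Real.log (1 - l * (X i - m0))) ∈
        ((fun l : ℝ => ∑ i, Real.log (1 - l * (X i - m0))) '' Set.Icc (-1:ℝ) 1) :=
      ⟨l, hl, rfl⟩
    refine le_trans ?_ (le_csSup hbdd hmem)
    -- per-term key inequality, summed
    have hkey : ∀ i : Fin n, (s*t*(X i - m0))^2 * (Real.log (1-t) + t) ≤
        t^2 * (Real.log (1 + s*t*(X i - m0)) - s*t*(X i - m0)) := by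
      intro i
      apply lemKEY t ht0 ht1
      · have : |s*t*(X i - m0)| ≤ t := by
          rw [abs_mul, abs_mul, hsabs, one_mul, abs_of_pos ht0]
          have h2 : |X i - m0| ≤ 1 := abs_le.2 ⟨hz1 i, hz2 i⟩
          nlinarith
        linarith [abs_le.1 this |>.1]
      · have : |s*t*(X i - m0)| ≤ t := by
          rw [abs_mul, abs_mul, hsabs, one_mul, abs_of_pos ht0]
          have h2 : |X i - m0| ≤ 1 := abs_le.2 ⟨hz1 i, hz2 i⟩
          nlinarith
        exact (abs_le.1 this).2
    have hsum := Finset.sum_le_sum (fun i (_ : i ∈ Finset.univ) => hkey i)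
    set L := ∑ i : Fin n, Real.log (1 + s*t*(X i - m0)) with hLdef
    have hLrw : ∑ i, Real.log (1 - l * (X i - m0)) = L := by
      apply Finset.sum_congr rfl
      intro i _
      congr 1
      rw [hldef]; ring
    rw [hLrw]
    have hsum1 : ∑ i : Fin n, (s*t*(X i - m0))^2 * (Real.log (1-t) + t)
        = t^2 * (V * (Real.log (1-t) + t)) := by
      rw [hV, Finset.sum_mul, Finset.mul_sum]
      apply Finset.sum_congr rfl
      intro i _
      rw [mul_pow, mul_pow, hs2]
      ring
    have hsum2 : ∑ i : Fin n, t^2 * (Real.log (1 + s*t*(X i - m0)) - s*t*(X i - m0))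
        = t^2 * (L - t*A) := by
      rw [← Finset.mul_sum, Finset.sum_sub_distrib, ← hLdef, ← Finset.mul_sum, ← hS]
      have : s * t * S = t * A := by rw [mul_comm s t, mul_assoc, hsS]
      rw [this]
    rw [hsum1, hsum2] at hsum
    have hVC : V * (Real.log (1-t) + t) ≤ L - t*A :=
      (mul_le_mul_iff_right₀ (pow_pos ht0 2)).1 hsum
    -- rewrite log(1-t)
    have h1mt : 1 - t = V/(A+V) := by
      rw [htdef]
      field_simp
      ring
    have hlog1mt : Real.log (1-t) = Real.log V - Real.log (A+V) := by
      rw [h1mt, Real.log_div (ne_of_gt hVpos) (ne_of_gt hAV)]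
    -- Padé bound
    have hpade := lemPADE (A/V) (le_of_lt (div_pos hApos hVpos))
    have h1p : (1:ℝ) + A/V = (A+V)/V := by field_simp; ring
    have hlogAV : Real.log (A+V) - Real.log V ≤ (A/V)*(6+A/V)/(6+4*(A/V)) := by
      rw [← Real.log_div (ne_of_gt hAV) (ne_of_gt hVpos), ← h1p]
      exact hpade
    have hfinal : S^2 / ((4/3)*A + 2*V)
        = t*A + V*t - V*((A/V)*(6+A/V)/(6+4*(A/V))) := by
      have hSA : S^2 = A^2 := (sq_abs S).symm
      have h64 : (0:ℝ) < 6 + 4*(A/V) := by positivity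
      have hD : (0:ℝ) < (4/3)*A + 2*V := by linarith
      rw [hSA, htdef]
      field_simp
      ring
    rw [hfinal]
    have step : t*A + V*t - V*((A/V)*(6+A/V)/(6+4*(A/V)))
        ≤ t*A + V*(Real.log (1-t) + t) := by
      rw [hlog1mt]
      have := mul_le_mul_of_nonneg_left hlogAV (le_of_lt hVpos)
      nlinarith
    linarith
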